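/- arXiv:2103.11069 — 2 statements merged into one kernel-verified Lean document; each statement's English description precedes it below -/
import Mathlib

section
/- If f : [a,b] → ℝ is absolutely continuous, then the total variation of f over [a,b] equals the integral of |f'(x)| over [a,b]. -/
open Set MeasureTheory

/-- `f` is absolutely continuous on `[a,b]`: for every `ε > 0` there is `δ > 0` such that
for any finite collection of subintervals of `[a,b]` with pairwise disjoint interiors and
total length less than `δ`, the sum of `|f(vᵢ) - f(uᵢ)|` is less than `ε`. -/
def AbsolutelyContinuousOnInterval' (f : ℝ → ℝ) (a b : ℝ) : Prop :=
  ∀ ε > (0:ℝ), ∃ δ > (0:ℝ), ∀ (n : ℕ) (u v : Fin n → ℝ),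
    (∀ i, a ≤ u i ∧ u i ≤ v i ∧ v i ≤ b) →
    (Pairwise fun i j => Disjoint (Set.Ioo (u i) (v i)) (Set.Ioo (u j) (v j))) →
    (∑ i, (v i - u i)) < δ →
    (∑ i, |f (v i) - f (u i)|) < ε

/-!
`TV ≤ ∫ |f'|`: by the fundamental theorem of calculus for absolutely continuous functions,
`|f y - f x| = |∫_x^y f'| ≤ ∫_x^y |f'|` on every subinterval, so `f` varies no more than the
monotone function `x ↦ ∫_a^x |f'|`.

`∫ |f'| ≤ TV` holds for every function of bounded variation: with `V x = Var(f, [a, x])`, both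
`V + f` and `V - f` are monotone, hence `|f'| ≤ V'` almost everywhere, and the derivative of the
monotone function `V` integrates to at most `V b - V a = TV`.
-/

lemma dist_eq_abs_sub_max_min (f : ℝ → ℝ) (x y : ℝ) :
    dist (f x) (f y) = |f (max x y) - f (min x y)| := by
  rcases le_total x y with h | h
  · rw [max_eq_right h, min_eq_left h, Real.dist_eq, abs_sub_comm]
  · rw [max_eq_left h, min_eq_right h, Real.dist_eq]

theorem AbsolutelyContinuousOnInterval'.absolutelyContinuousOnInterval {f : ℝ → ℝ} {a b : ℝ}
    (hab : a ≤ b) (hf : AbsolutelyContinuousOnInterval' f a b) :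
    AbsolutelyContinuousOnInterval f a b := by
  rw [absolutelyContinuousOnInterval_iff]
  intro ε hε
  obtain ⟨δ, hδ, hfδ⟩ := hf ε hε
  refine ⟨δ, hδ, fun ⟨n, I⟩ ⟨hmem, hdisj⟩ hlen => ?_⟩
  rw [uIcc_of_le hab] at hmem
  simp only [Finset.sum_range, dist_eq_abs_sub_max_min f] at hlen ⊢
  refine hfδ n (fun i => min (I i).1 (I i).2) (fun i => max (I i).1 (I i).2)
    (fun i => ?_) (fun i j hij => ?_) ?_
  · obtain ⟨h1, h2⟩ := hmem i (Finset.mem_range.2 i.2)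
    exact ⟨le_min h1.1 h2.1, min_le_max, max_le h1.2 h2.2⟩
  · have := hdisj (Finset.mem_range.2 i.2) (Finset.mem_range.2 j.2) (Fin.val_ne_of_ne hij)
    exact this.mono Ioo_subset_Ioc_self Ioo_subset_Ioc_self
  · simpa only [max_sub_min_eq_abs', Real.dist_eq] using hlen

lemma abs_deriv_le_deriv_of_monotoneOn {f g : ℝ → ℝ} {s : Set ℝ} {x : ℝ} (hs : s ∈ nhds x)
    (hadd : MonotoneOn (g + f) s) (hsub : MonotoneOn (g - f) s)
    (hf : DifferentiableAt ℝ f x) (hg : DifferentiableAt ℝ g x) :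
    |deriv f x| ≤ deriv g x := by
  have h₁ := hadd.derivWithin_nonneg (x := x)
  have h₂ := hsub.derivWithin_nonneg (x := x)
  rw [derivWithin_of_mem_nhds hs, deriv_add hg hf] at h₁
  rw [derivWithin_of_mem_nhds hs, deriv_sub hg hf] at h₂
  exact abs_le.2 ⟨by linarith, by linarith⟩

theorem BoundedVariationOn.ofReal_integral_abs_deriv_le {f : ℝ → ℝ} {a b : ℝ} (hab : a ≤ b)
    (hf : BoundedVariationOn f (Icc a b)) :
    ENNReal.ofReal (∫ x in a..b, |deriv f x|) ≤ eVariationOn f (Icc a b) := by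
  have ha : a ∈ Icc a b := left_mem_Icc.2 hab
  have hb : b ∈ Icc a b := right_mem_Icc.2 hab
  set V := variationOnFromTo f (Icc a b) a
  have hV : MonotoneOn V (Icc a b) :=
    variationOnFromTo.monotoneOn hf.locallyBoundedVariationOn ha
  have hle : ∀ᵐ x ∂volume.restrict (Icc a b), |deriv f x| ≤ deriv V x := by
    rw [← Measure.restrict_congr_set Ioo_ae_eq_Icc, ae_restrict_iff' measurableSet_Ioo]
    filter_upwards [(uIcc_of_le hab ▸ hf).ae_differentiableAt_of_mem_uIcc,
      hV.ae_differentiableWithinAt_of_mem] with x hfx hVx hx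
    have hs : Icc a b ∈ nhds x := Icc_mem_nhds hx.1 hx.2
    rw [uIcc_of_le hab] at hfx
    exact abs_deriv_le_deriv_of_monotoneOn hs
      (variationOnFromTo.add_self_monotoneOn hf.locallyBoundedVariationOn ha)
      (variationOnFromTo.sub_self_monotoneOn hf.locallyBoundedVariationOn ha)
      (hfx (Ioo_subset_Icc_self hx)) ((hVx (Ioo_subset_Icc_self hx)).differentiableAt hs)
  have hVint : ∫ x in a..b, deriv V x ≤ V b - V a := by
    have := (uIcc_of_le hab ▸ hV).intervalIntegral_deriv_mem_uIcc
    rw [uIcc_of_le (sub_nonneg.2 (hV ha hb hab))] at this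
    exact this.2
  calc ENNReal.ofReal (∫ x in a..b, |deriv f x|)
      ≤ ENNReal.ofReal (V b - V a) := by
        refine ENNReal.ofReal_le_ofReal (le_trans ?_ hVint)
        refine intervalIntegral.integral_mono_ae_restrict hab ?_ ?_ hle
        · exact (uIcc_of_le hab ▸ hf).intervalIntegrable_deriv.abs
        · exact (uIcc_of_le hab ▸ hV).intervalIntegrable_deriv
    _ = eVariationOn f (Icc a b) := by
        rw [show V a = 0 from variationOnFromTo.self _ _ a, sub_zero,
          show V b = _ from variationOnFromTo.eq_of_le _ _ hab, inter_self,
          ENNReal.ofReal_toReal hf]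

theorem eVariationOn_le_of_edist_le {α E F : Type*} [LinearOrder α] [PseudoEMetricSpace E]
    [PseudoEMetricSpace F] {f : α → E} {g : α → F} {s : Set α}
    (h : ∀ x ∈ s, ∀ y ∈ s, x ≤ y → edist (f y) (f x) ≤ edist (g y) (g x)) :
    eVariationOn f s ≤ eVariationOn g s := by
  refine iSup_le fun ⟨n, u, hu, us⟩ => le_trans ?_ (eVariationOn.sum_le (n := n) hu us)
  exact Finset.sum_le_sum fun i _ => h _ (us i) _ (us (i + 1)) (hu (Nat.le_succ i))

theorem AbsolutelyContinuousOnInterval.eVariationOn_le_ofReal_integral_abs_deriv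
    {f : ℝ → ℝ} {a b : ℝ} (hab : a ≤ b) (hf : AbsolutelyContinuousOnInterval f a b) :
    eVariationOn f (Icc a b) ≤ ENNReal.ofReal (∫ x in a..b, |deriv f x|) := by
  set G := fun y => ∫ t in a..y, |deriv f t|
  have hint : IntervalIntegrable (fun t => |deriv f t|) volume a b :=
    hf.intervalIntegrable_deriv.abs
  have hG : ∀ x ∈ Icc a b, ∀ y ∈ Icc a b, x ≤ y → |f y - f x| ≤ G y - G x := by
    intro x hx y hy hxy
    rw [← uIcc_of_le hab] at hx hy
    calc |f y - f x| = |∫ t in x..y, deriv f t| := by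
          rw [(hf.mono (uIcc_subset_uIcc hx hy)).integral_deriv_eq_sub]
      _ ≤ ∫ t in x..y, |deriv f t| := intervalIntegral.abs_integral_le_integral_abs hxy
      _ = G y - G x := (intervalIntegral.integral_interval_sub_left
          (hint.mono_set (uIcc_subset_uIcc_left hy))
          (hint.mono_set (uIcc_subset_uIcc_left hx))).symm
  have hGmono : MonotoneOn G (Icc a b) := fun x hx y hy hxy =>
    sub_nonneg.1 ((abs_nonneg _).trans (hG x hx y hy hxy))
  calc eVariationOn f (Icc a b) ≤ eVariationOn G (Icc a b) := by
        refine eVariationOn_le_of_edist_le fun x hx y hy hxy => ?_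
        rw [edist_dist, edist_dist, Real.dist_eq, Real.dist_eq,
          abs_of_nonneg (sub_nonneg.2 (hGmono hx hy hxy))]
        exact ENNReal.ofReal_le_ofReal (hG x hx y hy hxy)
    _ = ENNReal.ofReal (G b - G a) := by
        rw [← hGmono.eVariationOn_eq (left_mem_Icc.2 hab) (right_mem_Icc.2 hab), inter_self]
    _ = ENNReal.ofReal (∫ x in a..b, |deriv f x|) := by
        simp only [G, intervalIntegral.integral_same, sub_zero]

/-- If `f` is absolutely continuous on `[a,b]`, its total variation on `[a,b]` equals
`∫_a^b |f'(x)| dx`. -/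
theorem stmt0 (f : ℝ → ℝ) (a b : ℝ) (hab : a ≤ b)
    (hf : AbsolutelyContinuousOnInterval' f a b) :
    eVariationOn f (Set.Icc a b) = ENNReal.ofReal (∫ x in a..b, |deriv f x|) := by
  have hf' := hf.absolutelyContinuousOnInterval hab
  refine le_antisymm (hf'.eVariationOn_le_ofReal_integral_abs_deriv hab) ?_
  exact (uIcc_of_le hab ▸ hf'.boundedVariationOn).ofReal_integral_abs_deriv_le hab
end

section
/- Let f : [−π, π] → ℝ have bounded total variation TV(f). Then for every nonzero integer k, the Fourier coefficient f̂ₖ = (1/(2π)) ∫_{−π}^{π} f(x) e^{−ikx} dx satisfies |f̂ₖ| ≤ (2/(|k|π))·TV(f). -/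
/-!
Write `f = p - q` with `p, q` monotone and total increase `TV(f)` (Jordan decomposition). A
monotone `g` agrees a.e. with its right-continuous version `S`, and `S x = S a + μ (a, x]` for
the Stieltjes measure `μ` of `S`. So if `∫ₐᵇ φ = 0`, Fubini gives
`∫ₐᵇ g φ = ∫ₐᵇ (S - S a) φ = ∫_{(a,b]} (∫ₜᵇ φ) dμ(t)`, whence
`‖∫ₐᵇ g φ‖ ≤ sup ‖∫ₜᵇ φ‖ · (g b - g a)`. For `φ x = e^{-ikx}` on `[-π, π]` the integral vanishes
and every tail is at most `2/|k|`.
-/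

open Set Real MeasureTheory

variable {E : Type*} [NormedAddCommGroup E] [NormedSpace ℝ E]

theorem MonotoneOn.integrableOn_smul {g : ℝ → ℝ} {φ : ℝ → E} {a b : ℝ}
    (hg : MonotoneOn g (Icc a b)) (hφ : IntegrableOn φ (Icc a b)) :
    IntegrableOn (fun x => g x • φ x) (Icc a b) := by
  refine hφ.bdd_smul (max |g a| |g b|)
    (aemeasurable_restrict_of_monotoneOn measurableSet_Icc hg).aestronglyMeasurable
    (ae_restrict_of_forall_mem measurableSet_Icc fun x hx => ?_)
  have hab : a ≤ b := hx.1.trans hx.2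
  exact abs_le_max_abs_abs (hg ⟨le_rfl, hab⟩ hx hx.1) (hg hx ⟨hab, le_rfl⟩ hx.2)

variable [CompleteSpace E]

theorem StieltjesFunction.setIntegral_sub_smul_eq (S : StieltjesFunction ℝ) {φ : ℝ → E}
    {a b : ℝ} (hφ : IntegrableOn φ (Ioc a b)) :
    ∫ x in Ioc a b, (S x - S a) • φ x =
      ∫ t in Ioc a b, (∫ x in t..b, φ x) ∂S.measure := by
  have : IsFiniteMeasure (S.measure.restrict (Ioc a b)) :=
    isFiniteMeasure_restrict.2 (by simp [S.measure_Ioc])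
  let F : ℝ → ℝ → E := fun x t => (Iic x).indicator (fun _ => φ x) t
  have hF : Integrable (Function.uncurry F)
      ((volume.restrict (Ioc a b)).prod (S.measure.restrict (Ioc a b))) :=
    (hφ.comp_fst _).indicator (measurableSet_le measurable_snd measurable_fst)
  calc ∫ x in Ioc a b, (S x - S a) • φ x
      = ∫ x in Ioc a b, ∫ t in Ioc a b, F x t ∂S.measure := by
        refine setIntegral_congr_fun measurableSet_Ioc fun x hx => ?_
        rw [integral_indicator_const _ measurableSet_Iic,
          measureReal_restrict_apply measurableSet_Iic, Iic_inter_Ioc_of_le hx.2,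
          measureReal_def, S.measure_Ioc, ENNReal.toReal_ofReal (sub_nonneg.2 (S.mono hx.1.le))]
    _ = ∫ t in Ioc a b, (∫ x in Ioc a b, F x t) ∂S.measure := integral_integral_swap hF
    _ = _ := by
        refine setIntegral_congr_fun measurableSet_Ioc fun t ht => ?_
        have hFt : (fun x => F x t) = (Ici t).indicator φ := by
          ext x; simp [F, indicator]
        have hset : Ici t ∩ Ioc a b = Icc t b := by
          ext x
          simp only [mem_inter_iff, mem_Ici, mem_Ioc, mem_Icc]
          exact ⟨fun h => ⟨h.1, h.2.2⟩, fun h => ⟨h.1, ht.1.trans_le h.1, h.2⟩⟩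
        rw [hFt, integral_indicator measurableSet_Ici, Measure.restrict_restrict measurableSet_Ici,
          hset, integral_Icc_eq_integral_Ioc, intervalIntegral.integral_of_le ht.2]

theorem StieltjesFunction.norm_setIntegral_sub_smul_le (S : StieltjesFunction ℝ) {φ : ℝ → E}
    {a b M : ℝ} (hab : a ≤ b) (hφ : IntegrableOn φ (Ioc a b))
    (hM : ∀ t ∈ Ioc a b, ‖∫ x in t..b, φ x‖ ≤ M) :
    ‖∫ x in Ioc a b, (S x - S a) • φ x‖ ≤ M * (S b - S a) := by
  rw [S.setIntegral_sub_smul_eq hφ]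
  calc _ ≤ M * S.measure.real (Ioc a b) :=
        norm_setIntegral_le_of_norm_le_const (by simp [S.measure_Ioc]) hM
    _ = M * (S b - S a) := by
        rw [measureReal_def, S.measure_Ioc, ENNReal.toReal_ofReal (sub_nonneg.2 (S.mono hab))]

theorem Monotone.rightLim_ae_eq {G : ℝ → ℝ} (hG : Monotone G) (μ : Measure ℝ)
    [NullSingletonClass μ] :
    Function.rightLim G =ᵐ[μ] G := by
  filter_upwards [hG.countable_not_continuousAt.ae_notMem μ] with x hx
  exact hG.continuousWithinAt_Ioi_iff_rightLim_eq.1 (not_not.1 hx).continuousWithinAt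

theorem Monotone.norm_intervalIntegral_smul_le {G : ℝ → ℝ} {φ : ℝ → E} {a b M : ℝ}
    (hG : Monotone G) (hGb : ContinuousWithinAt G (Ici b) b) (hab : a ≤ b)
    (hφ : IntegrableOn φ (Icc a b)) (hφ0 : ∫ x in a..b, φ x = 0)
    (hM : ∀ t ∈ Icc a b, ‖∫ x in t..b, φ x‖ ≤ M) :
    ‖∫ x in a..b, G x • φ x‖ ≤ M * (G b - G a) := by
  set S := hG.stieltjesFunction
  have hSG : ∀ᵐ x ∂volume.restrict (Ioc a b), S x • φ x = G x • φ x := by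
    filter_upwards [ae_restrict_of_ae (hG.rightLim_ae_eq volume)] with x hx
    rw [hG.stieltjesFunction_eq, hx]
  have hSb : S b = G b :=
    hG.continuousWithinAt_Ioi_iff_rightLim_eq.1 (hGb.mono Ioi_subset_Ici_self)
  have hSa : G a ≤ S a := hG.le_rightLim le_rfl
  have hM0 : 0 ≤ M := (norm_nonneg _).trans (hM b ⟨hab, le_rfl⟩)
  have hφ' : IntegrableOn φ (Ioc a b) := hφ.mono_set Ioc_subset_Icc_self
  have hSφ : IntegrableOn (fun x => S x • φ x) (Ioc a b) :=
    ((S.mono.monotoneOn _).integrableOn_smul hφ).mono_set Ioc_subset_Icc_self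
  have hshift : ∫ x in Ioc a b, (S x - S a) • φ x = ∫ x in a..b, G x • φ x := by
    simp_rw [sub_smul]
    rw [integral_sub (g := fun x => S a • φ x) hSφ (hφ'.smul (S a)), integral_smul,
      ← intervalIntegral.integral_of_le hab (f := φ), hφ0, smul_zero, sub_zero,
      integral_congr_ae hSG, intervalIntegral.integral_of_le hab]
  calc ‖∫ x in a..b, G x • φ x‖ ≤ M * (S b - S a) := by
        rw [← hshift]
        exact S.norm_setIntegral_sub_smul_le hab hφ' fun t ht => hM t (Ioc_subset_Icc_self ht)
    _ ≤ M * (G b - G a) := by gcongr; linarith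

theorem MonotoneOn.norm_intervalIntegral_smul_le {g : ℝ → ℝ} {φ : ℝ → E} {a b M : ℝ}
    (hg : MonotoneOn g (Icc a b)) (hab : a ≤ b)
    (hφ : IntegrableOn φ (Icc a b)) (hφ0 : ∫ x in a..b, φ x = 0)
    (hM : ∀ t ∈ Icc a b, ‖∫ x in t..b, φ x‖ ≤ M) :
    ‖∫ x in a..b, g x • φ x‖ ≤ M * (g b - g a) := by
  set G := IccExtend hab ((Icc a b).domRestrict g)
  have hG : Monotone G := (monotoneOn_iff_monotone.1 hg).IccExtend hab
  have hGb : ContinuousWithinAt G (Ici b) b :=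
    continuousWithinAt_const.congr (fun x hx => IccExtend_of_right_le hab _ (mem_Ici.1 hx))
      (IccExtend_right hab _)
  have hGg : EqOn G g (uIcc a b) := by
    rw [uIcc_of_le hab]; exact fun x hx => IccExtend_of_mem hab _ hx
  have hGφ : ∫ x in a..b, G x • φ x = ∫ x in a..b, g x • φ x :=
    intervalIntegral.integral_congr fun x hx => by simp only [hGg hx]
  rw [← hGφ, ← hGg left_mem_uIcc, ← hGg right_mem_uIcc]
  exact hG.norm_intervalIntegral_smul_le hGb hab hφ hφ0 hM

theorem BoundedVariationOn.norm_intervalIntegral_smul_le {f : ℝ → ℝ} {φ : ℝ → E} {a b M : ℝ}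
    (hf : BoundedVariationOn f (Icc a b)) (hab : a ≤ b)
    (hφ : IntegrableOn φ (Icc a b)) (hφ0 : ∫ x in a..b, φ x = 0)
    (hM : ∀ t ∈ Icc a b, ‖∫ x in t..b, φ x‖ ≤ M) :
    ‖∫ x in a..b, f x • φ x‖ ≤ M * (eVariationOn f (Icc a b)).toReal := by
  obtain ⟨p, q, hp, hq, hfpq, hvar⟩ :=
    hf.locallyBoundedVariationOn.exists_monotoneOn_sub_monotoneOn'
  have hint : ∀ g, MonotoneOn g (Icc a b) → IntervalIntegrable (fun x => g x • φ x) volume a b :=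
    fun g hg => (intervalIntegrable_iff_integrableOn_Icc_of_le hab).2 (hg.integrableOn_smul hφ)
  have hsplit :
      ∫ x in a..b, f x • φ x = (∫ x in a..b, p x • φ x) - ∫ x in a..b, q x • φ x := by
    rw [← intervalIntegral.integral_sub (hint p hp) (hint q hq)]
    simp only [hfpq, Pi.sub_apply, sub_smul]
  have htotal : (p b - p a) + (q b - q a) = (eVariationOn f (Icc a b)).toReal := by
    rw [hvar a ⟨le_rfl, hab⟩ b ⟨hab, le_rfl⟩, variationOnFromTo.eq_of_le _ _ hab, inter_self]
  calc ‖∫ x in a..b, f x • φ x‖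
      ≤ M * (p b - p a) + M * (q b - q a) := by
        rw [hsplit]
        exact (norm_sub_le _ _).trans (add_le_add (hp.norm_intervalIntegral_smul_le hab hφ hφ0 hM)
          (hq.norm_intervalIntegral_smul_le hab hφ hφ0 hM))
    _ = M * (eVariationOn f (Icc a b)).toReal := by rw [← htotal, mul_add]

theorem norm_exp_neg_I_mul_ofReal_mul_ofReal (ω x : ℝ) :
    ‖Complex.exp (-Complex.I * ω * x)‖ = 1 := by
  simp [Complex.norm_exp]

theorem norm_integral_exp_neg_I_mul_le {ω : ℝ} (hω : ω ≠ 0) (a b : ℝ) :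
    ‖∫ x in a..b, Complex.exp (-Complex.I * ω * x)‖ ≤ 2 / |ω| := by
  have hc : -Complex.I * ω ≠ 0 := by simpa using hω
  rw [integral_exp_mul_complex hc, norm_div, show ‖-Complex.I * (ω : ℂ)‖ = |ω| by simp]
  gcongr
  calc _ ≤ ‖Complex.exp (-Complex.I * ω * b)‖ + ‖Complex.exp (-Complex.I * ω * a)‖ :=
        norm_sub_le _ _
    _ = 2 := by simp only [norm_exp_neg_I_mul_ofReal_mul_ofReal]; norm_num

theorem integral_exp_neg_I_mul_intCast_eq_zero {k : ℤ} (hk : k ≠ 0) (a : ℝ) :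
    ∫ x in a..a + 2 * π, Complex.exp (-Complex.I * k * x) = 0 := by
  have hc : -Complex.I * k ≠ 0 := by simpa using hk
  rw [integral_exp_mul_complex hc, div_eq_zero_iff, sub_eq_zero]
  left
  have : -Complex.I * k * ((a + 2 * π : ℝ) : ℂ) =
      -Complex.I * k * a + (-k : ℤ) * (2 * π * Complex.I) := by
    push_cast; ring
  rw [this, Complex.exp_add, Complex.exp_int_mul_two_pi_mul_I, mul_one]

/-- If `f : [-π,π] → ℝ` has bounded total variation, then for every nonzero integer `k`,
the Fourier coefficient `f̂ₖ = (1/(2π)) ∫_{-π}^{π} f(x) e^{-ikx} dx` satisfies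
`|f̂ₖ| ≤ (2/(|k|π))·TV(f)`. -/
theorem stmt7 (f : ℝ → ℝ) (hf : BoundedVariationOn f (Set.Icc (-π) π))
    (k : ℤ) (hk : k ≠ 0) :
    ‖(1 / (2 * (π:ℂ))) * ∫ x in (-π)..π, (f x : ℂ) * Complex.exp (-Complex.I * k * x)‖
      ≤ 2 / (|(k:ℝ)| * π) * (eVariationOn f (Set.Icc (-π) π)).toReal := by
  set V := (eVariationOn f (Icc (-π) π)).toReal
  have hexp0 : ∫ x in (-π)..π, Complex.exp (-Complex.I * k * x) = 0 := by
    simpa [show -π + 2 * π = π by ring] using integral_exp_neg_I_mul_intCast_eq_zero hk (-π)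
  have hbound :
      ‖∫ x in (-π)..π, (f x : ℂ) * Complex.exp (-Complex.I * k * x)‖ ≤ 2 / |(k:ℝ)| * V := by
    simp_rw [← Complex.real_smul]
    refine hf.norm_intervalIntegral_smul_le (by linarith [pi_pos])
      (Continuous.integrableOn_Icc (by fun_prop)) hexp0 fun t _ => ?_
    simpa using norm_integral_exp_neg_I_mul_le (Int.cast_ne_zero.2 hk) t π
  calc _ ≤ 1 / (2 * π) * (2 / |(k:ℝ)| * V) := by
        rw [norm_mul]
        gcongr
        simp [abs_of_pos pi_pos]
    _ = 1 / (|(k:ℝ)| * π) * V := by field_simp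
    _ ≤ 2 / (|(k:ℝ)| * π) * V := by gcongr; norm_num
end
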